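/- Assume u₀ : ℝ² → ℝ is C¹, let C₁(S) := ∫_S ⟨∇u₀, Ry⟩² dy and C₂(S) := ∫_S ⟨∇u₀, y⟩² dy, and suppose |(τ+α')(s)| ≤ H₂ and |h'(s)/h(s)| ≤ H₁ for all s ∈ I. Let w ∈ C_c^∞(I°) and let η ∈ C_c^∞(I° × S) satisfy ∫_S u₀(y)·η(s,y) dy = 0 for every s ∈ I. Then | ∫_{I×S} w'(s)·u₀(y)·( ∂_s η − η·h'/h + (τ+α')·⟨∇_y η, Ry⟩ − (h'/h)·⟨∇_y η, y⟩ ) dy ds | ≤ ( H₂·√C₁(S) + H₁·√C₂(S) )·( ∫_I w'(s)² ds )^{1/2}·( ∫_{I×S} η(s,y)² dy ds )^{1/2}. -/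

import Mathlib

open MeasureTheory Set

/-- Partial derivative in the longitudinal variable `s` of a function on `ℝ × ℝ²`. -/
noncomputable def ds (v : ℝ × ℝ × ℝ → ℝ) (p : ℝ × ℝ × ℝ) : ℝ :=
  deriv (fun t => v (t, p.2)) p.1

/-- Partial derivative in the transverse variable `y₁`. -/
noncomputable def d1 (v : ℝ × ℝ × ℝ → ℝ) (p : ℝ × ℝ × ℝ) : ℝ :=
  deriv (fun t => v (p.1, t, p.2.2)) p.2.1

/-- Partial derivative in the transverse variable `y₂`. -/
noncomputable def d2 (v : ℝ × ℝ × ℝ → ℝ) (p : ℝ × ℝ × ℝ) : ℝ :=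
  deriv (fun t => v (p.1, p.2.1, t)) p.2.2

/-- First partial derivative of a function on `ℝ²`. -/
noncomputable def pd1 (v : ℝ × ℝ → ℝ) (y : ℝ × ℝ) : ℝ := deriv (fun t => v (t, y.2)) y.1

/-- Second partial derivative of a function on `ℝ²`. -/
noncomputable def pd2 (v : ℝ × ℝ → ℝ) (y : ℝ × ℝ) : ℝ := deriv (fun t => v (y.1, t)) y.2

/-- The factor `β_ε(s,y) = 1 - ε h(s) k(s) ⟨z_α(s), y⟩`, with `z_α = (cos α, -sin α)`. -/
noncomputable def beta (h k α : ℝ → ℝ) (ε : ℝ) (p : ℝ × ℝ × ℝ) : ℝ :=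
  1 - ε * h p.1 * k p.1 * (Real.cos (α p.1) * p.2.1 - Real.sin (α p.1) * p.2.2)

/-- The quadratic form `g_ε` of the paper, after the changes of variables, on smooth
compactly supported functions on `I° × S`.  Here `αd` stands for `α'` and `hdh` for
`h'/h`, `R` is the rotation `R(y₁,y₂) = (-y₂,y₁)`. -/
noncomputable def gform (I : Set ℝ) (S : Set (ℝ × ℝ)) (k τ αd hdh h α : ℝ → ℝ)
    (lam0 M c ε : ℝ) (v : ℝ × ℝ × ℝ → ℝ) : ℝ :=
  ∫ p in (I ×ˢ S : Set (ℝ × ℝ × ℝ)),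
    ((ds v p - v p * hdh p.1
        + (τ p.1 + αd p.1) * (d1 v p * (-p.2.2) + d2 v p * p.2.1)
        - hdh p.1 * (d1 v p * p.2.1 + d2 v p * p.2.2)) ^ 2
      + beta h k α ε p *
          (((d1 v p) ^ 2 + (d2 v p) ^ 2) / (ε ^ 2 * (h p.1) ^ 2)
            - lam0 * (v p) ^ 2 / (ε ^ 2 * M ^ 2))
      + c * (v p) ^ 2)

/-- integral of a derivative of a compactly supported C¹ function is zero -/
lemma integral_deriv_zero {f : ℝ → ℝ} (hf : ContDiff ℝ 1 f) (hs : HasCompactSupport f) :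
    ∫ x, deriv f x = 0 := by
  have hi : Integrable (deriv f) := ((hf.continuous_deriv le_rfl).integrable_of_hasCompactSupport hs.deriv)
  rw [← intervalIntegral.integral_Iic_add_Ioi (hi.integrableOn) (hi.integrableOn) (b := 0)]
  rw [hs.integral_Iic_deriv_eq hf, hs.integral_Ioi_deriv_eq hf]
  ring

/-- slice of compactly supported function in first variable -/
lemma hcs_slice_fst {f : ℝ × ℝ → ℝ} (hf : HasCompactSupport f) (c : ℝ) :
    HasCompactSupport (fun t => f (t, c)) := by
  apply HasCompactSupport.intro (hf.image continuous_fst)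
  intro t ht
  by_contra h
  exact ht ⟨(t, c), subset_tsupport f h, rfl⟩

lemma hcs_slice_snd {f : ℝ × ℝ → ℝ} (hf : HasCompactSupport f) (c : ℝ) :
    HasCompactSupport (fun t => f (c, t)) := by
  apply HasCompactSupport.intro (hf.image continuous_snd)
  intro t ht
  by_contra h
  exact ht ⟨(c, t), subset_tsupport f h, rfl⟩

lemma hasDerivAt_pd1 {f : ℝ × ℝ → ℝ} (hf : ContDiff ℝ 1 f) (y : ℝ × ℝ) :
    HasDerivAt (fun t => f (t, y.2)) (pd1 f y) y.1 := by
  have : DifferentiableAt ℝ (fun t : ℝ => f (t, y.2)) y.1 := by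
    exact (hf.differentiable one_ne_zero).differentiableAt.comp y.1
      ((differentiableAt_id).prodMk (differentiableAt_const _))
  exact this.hasDerivAt

lemma hasDerivAt_pd2 {f : ℝ × ℝ → ℝ} (hf : ContDiff ℝ 1 f) (y : ℝ × ℝ) :
    HasDerivAt (fun t => f (y.1, t)) (pd2 f y) y.2 := by
  have : DifferentiableAt ℝ (fun t : ℝ => f (y.1, t)) y.2 := by
    exact (hf.differentiable one_ne_zero).differentiableAt.comp y.2
      ((differentiableAt_const _).prodMk differentiableAt_id)
  exact this.hasDerivAt

lemma pd1_eq_fderiv {f : ℝ × ℝ → ℝ} (hf : ContDiff ℝ 1 f) (y : ℝ × ℝ) :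
    pd1 f y = fderiv ℝ f y (1, 0) := by
  have h1 : HasDerivAt (fun t : ℝ => f (t, y.2)) (fderiv ℝ f y (1, 0)) y.1 := by
    have h2 : HasDerivAt (fun t : ℝ => ((t, y.2) : ℝ × ℝ)) ((1 : ℝ), (0 : ℝ)) y.1 :=
      (hasDerivAt_id y.1).prodMk (hasDerivAt_const _ _)
    have h3 := ((hf.differentiable one_ne_zero) (y.1, y.2)).hasFDerivAt.comp_hasDerivAt y.1 h2
    exact h3
  exact ((hasDerivAt_pd1 hf y).unique h1)

lemma pd2_eq_fderiv {f : ℝ × ℝ → ℝ} (hf : ContDiff ℝ 1 f) (y : ℝ × ℝ) :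
    pd2 f y = fderiv ℝ f y (0, 1) := by
  have h1 : HasDerivAt (fun t : ℝ => f (y.1, t)) (fderiv ℝ f y (0, 1)) y.2 := by
    have h2 : HasDerivAt (fun t : ℝ => ((y.1, t) : ℝ × ℝ)) ((0 : ℝ), (1 : ℝ)) y.2 :=
      (hasDerivAt_const _ _).prodMk (hasDerivAt_id y.2)
    have h3 := ((hf.differentiable one_ne_zero) (y.1, y.2)).hasFDerivAt.comp_hasDerivAt y.2 h2
    exact h3
  exact ((hasDerivAt_pd2 hf y).unique h1)

lemma continuous_pd1 {f : ℝ × ℝ → ℝ} (hf : ContDiff ℝ 1 f) : Continuous (pd1 f) := by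
  have : Continuous fun y : ℝ × ℝ => fderiv ℝ f y (1, 0) :=
    (hf.continuous_fderiv one_ne_zero).clm_apply continuous_const
  exact this.congr fun y => (pd1_eq_fderiv hf y).symm

lemma continuous_pd2 {f : ℝ × ℝ → ℝ} (hf : ContDiff ℝ 1 f) : Continuous (pd2 f) := by
  have : Continuous fun y : ℝ × ℝ => fderiv ℝ f y (0, 1) :=
    (hf.continuous_fderiv one_ne_zero).clm_apply continuous_const
  exact this.congr fun y => (pd2_eq_fderiv hf y).symm

lemma pd1_zero_of_nmem {f : ℝ × ℝ → ℝ} {y : ℝ × ℝ} (h : y ∉ tsupport f) : pd1 f y = 0 := by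
  have hop : ∀ᶠ z in nhds y, f z = 0 := by
    filter_upwards [(isClosed_tsupport f).isOpen_compl.mem_nhds h] with z hz
    exact image_eq_zero_of_notMem_tsupport hz
  have hc : ContinuousAt (fun t : ℝ => ((t, y.2) : ℝ × ℝ)) y.1 := by fun_prop
  have h2 : ∀ᶠ t in nhds y.1, f (t, y.2) = 0 := by
    have hle : nhds ((y.1, y.2) : ℝ × ℝ) ≤ nhds y := le_of_eq (by rw [Prod.mk.eta])
    exact (hc.tendsto.mono_right hle).eventually hop
  have h3 : (fun t : ℝ => f (t, y.2)) =ᶠ[nhds y.1] (fun _ => 0) := h2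
  rw [pd1, h3.deriv_eq, deriv_const]

lemma pd2_zero_of_nmem {f : ℝ × ℝ → ℝ} {y : ℝ × ℝ} (h : y ∉ tsupport f) : pd2 f y = 0 := by
  have hop : ∀ᶠ z in nhds y, f z = 0 := by
    filter_upwards [(isClosed_tsupport f).isOpen_compl.mem_nhds h] with z hz
    exact image_eq_zero_of_notMem_tsupport hz
  have hc : ContinuousAt (fun t : ℝ => ((y.1, t) : ℝ × ℝ)) y.2 := by fun_prop
  have h2 : ∀ᶠ t in nhds y.2, f (y.1, t) = 0 := by
    have hle : nhds ((y.1, y.2) : ℝ × ℝ) ≤ nhds y := le_of_eq (by rw [Prod.mk.eta])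
    exact (hc.tendsto.mono_right hle).eventually hop
  have h3 : (fun t : ℝ => f (y.1, t)) =ᶠ[nhds y.2] (fun _ => 0) := h2
  rw [pd2, h3.deriv_eq, deriv_const]

lemma hcs_pd1 {f : ℝ × ℝ → ℝ} (hf : HasCompactSupport f) : HasCompactSupport (pd1 f) :=
  HasCompactSupport.intro hf fun _ h => pd1_zero_of_nmem h

lemma hcs_pd2 {f : ℝ × ℝ → ℝ} (hf : HasCompactSupport f) : HasCompactSupport (pd2 f) :=
  HasCompactSupport.intro hf fun _ h => pd2_zero_of_nmem h

/-- integral of first partial derivative over the plane vanishes -/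
lemma integral_pd1_zero {f : ℝ × ℝ → ℝ} (hf : ContDiff ℝ 1 f) (hs : HasCompactSupport f) :
    ∫ y : ℝ × ℝ, pd1 f y = 0 := by
  have hint : Integrable (pd1 f) := (continuous_pd1 hf).integrable_of_hasCompactSupport (hcs_pd1 hs)
  rw [MeasureTheory.Measure.volume_eq_prod] at hint ⊢
  rw [MeasureTheory.integral_prod _ hint]
  have := MeasureTheory.integral_integral_swap (f := fun a b => pd1 f (a, b)) (μ := volume) (ν := volume)
    (by exact hint)
  rw [this]
  have : ∀ b : ℝ, ∫ a : ℝ, pd1 f (a, b) = 0 := by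
    intro b
    have h1 : ContDiff ℝ 1 (fun t : ℝ => f (t, b)) :=
      hf.comp (contDiff_id.prodMk contDiff_const)
    exact integral_deriv_zero h1 (hcs_slice_fst hs b)
  simp [this]

lemma integral_pd2_zero {f : ℝ × ℝ → ℝ} (hf : ContDiff ℝ 1 f) (hs : HasCompactSupport f) :
    ∫ y : ℝ × ℝ, pd2 f y = 0 := by
  have hint : Integrable (pd2 f) := (continuous_pd2 hf).integrable_of_hasCompactSupport (hcs_pd2 hs)
  rw [MeasureTheory.Measure.volume_eq_prod] at hint ⊢
  rw [MeasureTheory.integral_prod _ hint]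
  have : ∀ a : ℝ, ∫ b : ℝ, pd2 f (a, b) = 0 := by
    intro a
    have h1 : ContDiff ℝ 1 (fun t : ℝ => f (a, t)) :=
      hf.comp (contDiff_const.prodMk contDiff_id)
    exact integral_deriv_zero h1 (hcs_slice_snd hs a)
  simp [this]
lemma parts_R {f g : ℝ × ℝ → ℝ} (hf : ContDiff ℝ 1 f) (hg : ContDiff ℝ 1 g)
    (hgs : HasCompactSupport g) :
    ∫ y : ℝ × ℝ, f y * (pd1 g y * (-y.2) + pd2 g y * y.1)
      = - ∫ y : ℝ × ℝ, (pd1 f y * (-y.2) + pd2 f y * y.1) * g y := by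
  set F1 : ℝ × ℝ → ℝ := fun z => f z * g z * (-z.2) with hF1def
  set F2 : ℝ × ℝ → ℝ := fun z => f z * g z * z.1 with hF2def
  have hF1 : ContDiff ℝ 1 F1 := (hf.mul hg).mul (contDiff_snd.neg)
  have hF2 : ContDiff ℝ 1 F2 := (hf.mul hg).mul contDiff_fst
  have hF1s : HasCompactSupport F1 := by
    apply HasCompactSupport.intro hgs
    intro z hz; simp [hF1def, image_eq_zero_of_notMem_tsupport hz]
  have hF2s : HasCompactSupport F2 := by
    apply HasCompactSupport.intro hgs
    intro z hz; simp [hF2def, image_eq_zero_of_notMem_tsupport hz]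
  have key : ∀ y : ℝ × ℝ, (pd1 f y * (-y.2) + pd2 f y * y.1) * g y
      + f y * (pd1 g y * (-y.2) + pd2 g y * y.1) = pd1 F1 y + pd2 F2 y := by
    rintro ⟨a, b⟩
    have h1 : pd1 F1 (a, b) = (pd1 f (a, b) * g (a, b) + f (a, b) * pd1 g (a, b)) * (-b) := by
      have h := ((hasDerivAt_pd1 hf (a, b)).mul (hasDerivAt_pd1 hg (a, b))).mul_const (-b)
      exact h.deriv
    have h2 : pd2 F2 (a, b) = (pd2 f (a, b) * g (a, b) + f (a, b) * pd2 g (a, b)) * a := by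
      have h := ((hasDerivAt_pd2 hf (a, b)).mul (hasDerivAt_pd2 hg (a, b))).mul_const a
      exact h.deriv
    rw [h1, h2]; ring
  have hcf : Continuous f := hf.continuous
  have hcg : Continuous g := hg.continuous
  have hA : Integrable (fun y : ℝ × ℝ => (pd1 f y * (-y.2) + pd2 f y * y.1) * g y) := by
    apply Continuous.integrable_of_hasCompactSupport
    · exact (((continuous_pd1 hf).mul (continuous_snd.neg)).add
        ((continuous_pd2 hf).mul continuous_fst)).mul hcg
    · apply HasCompactSupport.intro hgs
      intro z hz; simp [image_eq_zero_of_notMem_tsupport hz]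
  have hB : Integrable (fun y : ℝ × ℝ => f y * (pd1 g y * (-y.2) + pd2 g y * y.1)) := by
    apply Continuous.integrable_of_hasCompactSupport
    · exact hcf.mul (((continuous_pd1 hg).mul (continuous_snd.neg)).add
        ((continuous_pd2 hg).mul continuous_fst))
    · apply HasCompactSupport.intro hgs
      intro z hz
      simp [pd1_zero_of_nmem hz, pd2_zero_of_nmem hz]
  have hsum : (∫ y : ℝ × ℝ, (pd1 f y * (-y.2) + pd2 f y * y.1) * g y)
      + (∫ y : ℝ × ℝ, f y * (pd1 g y * (-y.2) + pd2 g y * y.1)) = 0 := by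
    rw [← integral_add hA hB]
    have : (fun y : ℝ × ℝ => (pd1 f y * (-y.2) + pd2 f y * y.1) * g y
        + f y * (pd1 g y * (-y.2) + pd2 g y * y.1)) = fun y => pd1 F1 y + pd2 F2 y :=
      funext key
    rw [this, integral_add
        ((continuous_pd1 hF1).integrable_of_hasCompactSupport (hcs_pd1 hF1s))
        ((continuous_pd2 hF2).integrable_of_hasCompactSupport (hcs_pd2 hF2s)),
      integral_pd1_zero hF1 hF1s, integral_pd2_zero hF2 hF2s, add_zero]
  linarith
lemma parts_Y {f g : ℝ × ℝ → ℝ} (hf : ContDiff ℝ 1 f) (hg : ContDiff ℝ 1 g)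
    (hgs : HasCompactSupport g) :
    ∫ y : ℝ × ℝ, f y * (pd1 g y * y.1 + pd2 g y * y.2)
      = - (∫ y : ℝ × ℝ, (pd1 f y * y.1 + pd2 f y * y.2) * g y)
        - 2 * ∫ y : ℝ × ℝ, f y * g y := by
  set F1 : ℝ × ℝ → ℝ := fun z => f z * g z * z.1 with hF1def
  set F2 : ℝ × ℝ → ℝ := fun z => f z * g z * z.2 with hF2def
  have hF1 : ContDiff ℝ 1 F1 := (hf.mul hg).mul contDiff_fst
  have hF2 : ContDiff ℝ 1 F2 := (hf.mul hg).mul contDiff_snd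
  have hF1s : HasCompactSupport F1 := by
    apply HasCompactSupport.intro hgs
    intro z hz; simp [hF1def, image_eq_zero_of_notMem_tsupport hz]
  have hF2s : HasCompactSupport F2 := by
    apply HasCompactSupport.intro hgs
    intro z hz; simp [hF2def, image_eq_zero_of_notMem_tsupport hz]
  have key : ∀ y : ℝ × ℝ, (pd1 f y * y.1 + pd2 f y * y.2) * g y
      + f y * (pd1 g y * y.1 + pd2 g y * y.2) + 2 * (f y * g y)
      = pd1 F1 y + pd2 F2 y := by
    rintro ⟨a, b⟩
    have h1 : pd1 F1 (a, b)
        = (pd1 f (a, b) * g (a, b) + f (a, b) * pd1 g (a, b)) * a + f (a, b) * g (a, b) * 1 := by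
      have h := ((hasDerivAt_pd1 hf (a, b)).mul (hasDerivAt_pd1 hg (a, b))).mul (hasDerivAt_id a)
      exact h.deriv
    have h2 : pd2 F2 (a, b)
        = (pd2 f (a, b) * g (a, b) + f (a, b) * pd2 g (a, b)) * b + f (a, b) * g (a, b) * 1 := by
      have h := ((hasDerivAt_pd2 hf (a, b)).mul (hasDerivAt_pd2 hg (a, b))).mul (hasDerivAt_id b)
      exact h.deriv
    rw [h1, h2]; ring
  have hcf : Continuous f := hf.continuous
  have hcg : Continuous g := hg.continuous
  have hA : Integrable (fun y : ℝ × ℝ => (pd1 f y * y.1 + pd2 f y * y.2) * g y) := by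
    apply Continuous.integrable_of_hasCompactSupport
    · exact (((continuous_pd1 hf).mul continuous_fst).add
        ((continuous_pd2 hf).mul continuous_snd)).mul hcg
    · apply HasCompactSupport.intro hgs
      intro z hz; simp [image_eq_zero_of_notMem_tsupport hz]
  have hB : Integrable (fun y : ℝ × ℝ => f y * (pd1 g y * y.1 + pd2 g y * y.2)) := by
    apply Continuous.integrable_of_hasCompactSupport
    · exact hcf.mul (((continuous_pd1 hg).mul continuous_fst).add
        ((continuous_pd2 hg).mul continuous_snd))
    · apply HasCompactSupport.intro hgs
      intro z hz
      simp [pd1_zero_of_nmem hz, pd2_zero_of_nmem hz]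
  have hC : Integrable (fun y : ℝ × ℝ => 2 * (f y * g y)) := by
    apply Continuous.integrable_of_hasCompactSupport
    · exact continuous_const.mul (hcf.mul hcg)
    · apply HasCompactSupport.intro hgs
      intro z hz; simp [image_eq_zero_of_notMem_tsupport hz]
  have e0 : ∫ y : ℝ × ℝ, ((pd1 f y * y.1 + pd2 f y * y.2) * g y
      + f y * (pd1 g y * y.1 + pd2 g y * y.2) + 2 * (f y * g y)) = 0 := by
    simp only [key]
    rw [integral_add
        ((continuous_pd1 hF1).integrable_of_hasCompactSupport (hcs_pd1 hF1s))
        ((continuous_pd2 hF2).integrable_of_hasCompactSupport (hcs_pd2 hF2s)),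
      integral_pd1_zero hF1 hF1s, integral_pd2_zero hF2 hF2s, add_zero]
  have e1 : ∫ y : ℝ × ℝ, ((pd1 f y * y.1 + pd2 f y * y.2) * g y
      + f y * (pd1 g y * y.1 + pd2 g y * y.2) + 2 * (f y * g y))
      = (∫ y : ℝ × ℝ, (pd1 f y * y.1 + pd2 f y * y.2) * g y)
      + (∫ y : ℝ × ℝ, f y * (pd1 g y * y.1 + pd2 g y * y.2))
      + (∫ y : ℝ × ℝ, 2 * (f y * g y)) := by
    have hAB : Integrable (fun y : ℝ × ℝ => (pd1 f y * y.1 + pd2 f y * y.2) * g y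
        + f y * (pd1 g y * y.1 + pd2 g y * y.2)) volume := hA.add hB
    rw [integral_add hAB hC, integral_add hA hB]
  have h2 : (∫ y : ℝ × ℝ, 2 * (f y * g y)) = 2 * ∫ y : ℝ × ℝ, f y * g y :=
    integral_const_mul 2 _
  linarith

/-- Cauchy-Schwarz for integrals. -/
lemma cs_abs {α : Type*} [MeasurableSpace α] {μ : Measure α} {f g : α → ℝ}
    (hf : AEStronglyMeasurable f μ) (hg : AEStronglyMeasurable g μ)
    (hf2 : Integrable (fun x => f x ^ 2) μ) (hg2 : Integrable (fun x => g x ^ 2) μ) :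
    ∫ x, |f x| * |g x| ∂μ ≤ Real.sqrt (∫ x, f x ^ 2 ∂μ) * Real.sqrt (∫ x, g x ^ 2 ∂μ) := by
  have h22 : (2 : ℝ).HolderConjugate 2 := Real.holderConjugate_iff.mpr ⟨one_lt_two, by norm_num⟩
  have hfm : MemLp f 2 μ := (memLp_two_iff_integrable_sq hf).2 hf2
  have hgm : MemLp g 2 μ := (memLp_two_iff_integrable_sq hg).2 hg2
  have hfm' : MemLp (fun x => |f x|) (ENNReal.ofReal 2) μ := by
    rw [show ENNReal.ofReal 2 = 2 by norm_num]
    simpa [Real.norm_eq_abs] using hfm.norm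
  have hgm' : MemLp (fun x => |g x|) (ENNReal.ofReal 2) μ := by
    rw [show ENNReal.ofReal 2 = 2 by norm_num]
    simpa [Real.norm_eq_abs] using hgm.norm
  have h := integral_mul_le_Lp_mul_Lq_of_nonneg h22
    (Filter.Eventually.of_forall fun x => abs_nonneg (f x))
    (Filter.Eventually.of_forall fun x => abs_nonneg (g x)) hfm' hgm'
  have e1 : ∀ h : α → ℝ, (∫ x, |h x| ^ (2 : ℝ) ∂μ) = ∫ x, h x ^ 2 ∂μ := by
    intro h
    congr 1; funext x
    rw [show ((2:ℝ)) = ((2:ℕ):ℝ) by norm_num, Real.rpow_natCast, sq_abs]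
  rw [e1 f, e1 g] at h
  calc ∫ x, |f x| * |g x| ∂μ
      ≤ (∫ x, f x ^ 2 ∂μ) ^ ((1:ℝ)/2) * (∫ x, g x ^ 2 ∂μ) ^ ((1:ℝ)/2) := h
    _ = Real.sqrt (∫ x, f x ^ 2 ∂μ) * Real.sqrt (∫ x, g x ^ 2 ∂μ) := by
        rw [Real.sqrt_eq_rpow, Real.sqrt_eq_rpow]

lemma cs_integral {α : Type*} [MeasurableSpace α] {μ : Measure α} {f g : α → ℝ}
    (hf : AEStronglyMeasurable f μ) (hg : AEStronglyMeasurable g μ)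
    (hf2 : Integrable (fun x => f x ^ 2) μ) (hg2 : Integrable (fun x => g x ^ 2) μ) :
    |∫ x, f x * g x ∂μ| ≤ Real.sqrt (∫ x, f x ^ 2 ∂μ) * Real.sqrt (∫ x, g x ^ 2 ∂μ) := by
  calc |∫ x, f x * g x ∂μ| ≤ ∫ x, |f x| * |g x| ∂μ := by
        simpa [Real.norm_eq_abs, abs_mul] using
          norm_integral_le_integral_norm (fun x => f x * g x) (μ := μ)
    _ ≤ _ := cs_abs hf hg hf2 hg2

section R3Helpers

variable {η : ℝ × ℝ × ℝ → ℝ}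

lemma hasDerivAt_ds (hη : ContDiff ℝ (⊤ : ℕ∞) η) (p : ℝ × ℝ × ℝ) :
    HasDerivAt (fun t => η (t, p.2)) (ds η p) p.1 := by
  have : DifferentiableAt ℝ (fun t : ℝ => η (t, p.2)) p.1 :=
    (hη.differentiable (by simp)).differentiableAt.comp p.1
      (differentiableAt_id.prodMk (differentiableAt_const _))
  exact this.hasDerivAt

lemma hasDerivAt_d1 (hη : ContDiff ℝ (⊤ : ℕ∞) η) (p : ℝ × ℝ × ℝ) :
    HasDerivAt (fun t => η (p.1, t, p.2.2)) (d1 η p) p.2.1 := by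
  have : DifferentiableAt ℝ (fun t : ℝ => η (p.1, t, p.2.2)) p.2.1 :=
    (hη.differentiable (by simp)).differentiableAt.comp p.2.1
      ((differentiableAt_const _).prodMk (differentiableAt_id.prodMk (differentiableAt_const _)))
  exact this.hasDerivAt

lemma hasDerivAt_d2 (hη : ContDiff ℝ (⊤ : ℕ∞) η) (p : ℝ × ℝ × ℝ) :
    HasDerivAt (fun t => η (p.1, p.2.1, t)) (d2 η p) p.2.2 := by
  have : DifferentiableAt ℝ (fun t : ℝ => η (p.1, p.2.1, t)) p.2.2 :=
    (hη.differentiable (by simp)).differentiableAt.comp p.2.2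
      ((differentiableAt_const _).prodMk ((differentiableAt_const _).prodMk differentiableAt_id))
  exact this.hasDerivAt

lemma ds_eq_fderiv (hη : ContDiff ℝ (⊤ : ℕ∞) η) (p : ℝ × ℝ × ℝ) :
    ds η p = fderiv ℝ η p ((1 : ℝ), (0 : ℝ), (0 : ℝ)) := by
  obtain ⟨s, y⟩ := p
  have h2 : HasDerivAt (fun t : ℝ => ((t, y) : ℝ × ℝ × ℝ)) ((1 : ℝ), ((0 : ℝ), (0 : ℝ))) s :=
    (hasDerivAt_id s).prodMk (hasDerivAt_const _ _)
  have h3 := ((hη.differentiable (by simp)) (s, y)).hasFDerivAt.comp_hasDerivAt s h2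
  exact (hasDerivAt_ds hη (s, y)).unique h3

lemma d1_eq_fderiv (hη : ContDiff ℝ (⊤ : ℕ∞) η) (p : ℝ × ℝ × ℝ) :
    d1 η p = fderiv ℝ η p ((0 : ℝ), (1 : ℝ), (0 : ℝ)) := by
  obtain ⟨s, a, b⟩ := p
  have h2 : HasDerivAt (fun t : ℝ => ((s, t, b) : ℝ × ℝ × ℝ)) ((0 : ℝ), ((1 : ℝ), (0 : ℝ))) a :=
    (hasDerivAt_const _ _).prodMk ((hasDerivAt_id a).prodMk (hasDerivAt_const _ _))
  have h3 := ((hη.differentiable (by simp)) (s, a, b)).hasFDerivAt.comp_hasDerivAt a h2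
  exact (hasDerivAt_d1 hη (s, a, b)).unique h3

lemma d2_eq_fderiv (hη : ContDiff ℝ (⊤ : ℕ∞) η) (p : ℝ × ℝ × ℝ) :
    d2 η p = fderiv ℝ η p ((0 : ℝ), (0 : ℝ), (1 : ℝ)) := by
  obtain ⟨s, a, b⟩ := p
  have h2 : HasDerivAt (fun t : ℝ => ((s, a, t) : ℝ × ℝ × ℝ)) ((0 : ℝ), ((0 : ℝ), (1 : ℝ))) b :=
    (hasDerivAt_const _ _).prodMk ((hasDerivAt_const _ _).prodMk (hasDerivAt_id b))
  have h3 := ((hη.differentiable (by simp)) (s, a, b)).hasFDerivAt.comp_hasDerivAt b h2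
  exact (hasDerivAt_d2 hη (s, a, b)).unique h3

lemma continuous_ds (hη : ContDiff ℝ (⊤ : ℕ∞) η) : Continuous (ds η) :=
  (((hη.continuous_fderiv (by simp)).clm_apply continuous_const)).congr
    fun p => (ds_eq_fderiv hη p).symm

lemma continuous_d1 (hη : ContDiff ℝ (⊤ : ℕ∞) η) : Continuous (d1 η) :=
  (((hη.continuous_fderiv (by simp)).clm_apply continuous_const)).congr
    fun p => (d1_eq_fderiv hη p).symm

lemma continuous_d2 (hη : ContDiff ℝ (⊤ : ℕ∞) η) : Continuous (d2 η) :=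
  (((hη.continuous_fderiv (by simp)).clm_apply continuous_const)).congr
    fun p => (d2_eq_fderiv hη p).symm

lemma ds_zero_of_nmem {p : ℝ × ℝ × ℝ} (h : p ∉ tsupport η) : ds η p = 0 := by
  obtain ⟨s, y⟩ := p
  have hop : ∀ᶠ z in nhds ((s, y) : ℝ × ℝ × ℝ), η z = 0 := by
    filter_upwards [(isClosed_tsupport η).isOpen_compl.mem_nhds h] with z hz
    exact image_eq_zero_of_notMem_tsupport hz
  have hc : ContinuousAt (fun t : ℝ => ((t, y) : ℝ × ℝ × ℝ)) s := by fun_prop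
  have h3 : (fun t : ℝ => η (t, y)) =ᶠ[nhds s] (fun _ => 0) := hc.tendsto.eventually hop
  show deriv (fun t => η (t, y)) s = 0
  rw [h3.deriv_eq, deriv_const]

lemma d1_zero_of_nmem {p : ℝ × ℝ × ℝ} (h : p ∉ tsupport η) : d1 η p = 0 := by
  obtain ⟨s, a, b⟩ := p
  have hop : ∀ᶠ z in nhds ((s, a, b) : ℝ × ℝ × ℝ), η z = 0 := by
    filter_upwards [(isClosed_tsupport η).isOpen_compl.mem_nhds h] with z hz
    exact image_eq_zero_of_notMem_tsupport hz
  have hc : ContinuousAt (fun t : ℝ => ((s, t, b) : ℝ × ℝ × ℝ)) a := by fun_prop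
  have h3 : (fun t : ℝ => η (s, t, b)) =ᶠ[nhds a] (fun _ => 0) := hc.tendsto.eventually hop
  show deriv (fun t => η (s, t, b)) a = 0
  rw [h3.deriv_eq, deriv_const]

lemma d2_zero_of_nmem {p : ℝ × ℝ × ℝ} (h : p ∉ tsupport η) : d2 η p = 0 := by
  obtain ⟨s, a, b⟩ := p
  have hop : ∀ᶠ z in nhds ((s, a, b) : ℝ × ℝ × ℝ), η z = 0 := by
    filter_upwards [(isClosed_tsupport η).isOpen_compl.mem_nhds h] with z hz
    exact image_eq_zero_of_notMem_tsupport hz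
  have hc : ContinuousAt (fun t : ℝ => ((s, a, t) : ℝ × ℝ × ℝ)) b := by fun_prop
  have h3 : (fun t : ℝ => η (s, a, t)) =ᶠ[nhds b] (fun _ => 0) := hc.tendsto.eventually hop
  show deriv (fun t => η (s, a, t)) b = 0
  rw [h3.deriv_eq, deriv_const]

end R3Helpers

/-- Estimate of the cross term `m_ε¹(wu₀, η)` in the proof of the dimensional-reduction
theorem: if `|τ + α'| ≤ H₂` and `|h'/h| ≤ H₁` on `I`, and `η(s,·) ⟂ u₀` in `L²(S)` for
all `s ∈ I`, then `|m_ε¹(wu₀,η)| ≤ (H₂√C₁(S) + H₁√C₂(S)) ‖w'‖ ‖η‖`. -/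
theorem cross_term_m1_estimate
    (S : Set (ℝ × ℝ)) (hSopen : IsOpen S) (hSbdd : Bornology.IsBounded S)
    (hSne : S.Nonempty)
    (I : Set ℝ) (hI : I.OrdConnected)
    (u₀ : ℝ × ℝ → ℝ) (hu₀ : ContDiff ℝ 1 u₀)
    (τ αd hdh h : ℝ → ℝ) (hh : ∀ s ∈ I, 0 < h s)
    (H₁ H₂ : ℝ)
    (hH2 : ∀ s ∈ I, |τ s + αd s| ≤ H₂)
    (hH1 : ∀ s ∈ I, |hdh s| ≤ H₁)
    (C1 C2 : ℝ)
    (hC1 : C1 = ∫ y in S, (pd1 u₀ y * (-y.2) + pd2 u₀ y * y.1) ^ 2)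
    (hC2 : C2 = ∫ y in S, (pd1 u₀ y * y.1 + pd2 u₀ y * y.2) ^ 2)
    (w : ℝ → ℝ) (hw : ContDiff ℝ (⊤ : ℕ∞) w) (hwsupp : HasCompactSupport w)
    (hwI : tsupport w ⊆ interior I)
    (η : ℝ × ℝ × ℝ → ℝ) (hη : ContDiff ℝ (⊤ : ℕ∞) η) (hηsupp : HasCompactSupport η)
    (hηI : tsupport η ⊆ (interior I) ×ˢ S)
    (horth : ∀ s ∈ I, (∫ y in S, u₀ y * η (s, y)) = 0) :
    |∫ p in (I ×ˢ S : Set (ℝ × ℝ × ℝ)),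
        deriv w p.1 * u₀ p.2 *
          (ds η p - η p * hdh p.1
            + (τ p.1 + αd p.1) * (d1 η p * (-p.2.2) + d2 η p * p.2.1)
            - hdh p.1 * (d1 η p * p.2.1 + d2 η p * p.2.2))| ≤
      (H₂ * Real.sqrt C1 + H₁ * Real.sqrt C2) *
        Real.sqrt (∫ s in I, (deriv w s) ^ 2) *
        Real.sqrt (∫ p in (I ×ˢ S : Set (ℝ × ℝ × ℝ)), (η p) ^ 2) := by
    classical
  -- abbreviations
  set F : ℝ × ℝ × ℝ → ℝ := fun p =>
    deriv w p.1 * u₀ p.2 *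
      (ds η p - η p * hdh p.1
        + (τ p.1 + αd p.1) * (d1 η p * (-p.2.2) + d2 η p * p.2.1)
        - hdh p.1 * (d1 η p * p.2.1 + d2 η p * p.2.2)) with hFdef
  have hImeas : MeasurableSet I := hI.measurableSet
  have hrestr : (volume : Measure (ℝ × ℝ × ℝ)).restrict (I ×ˢ S)
      = ((volume : Measure ℝ).restrict I).prod ((volume : Measure (ℝ × ℝ)).restrict S) := by
    rw [Measure.prod_restrict]; rfl
  have hC1nn : 0 ≤ C1 := hC1 ▸ integral_nonneg fun y => sq_nonneg _
  have hC2nn : 0 ≤ C2 := hC2 ▸ integral_nonneg fun y => sq_nonneg _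
  -- empty I case
  rcases I.eq_empty_or_nonempty with hIe | ⟨s₀, hs₀⟩
  · subst hIe
    simp [Real.sqrt_zero]
  have hH2nn : 0 ≤ H₂ := (abs_nonneg _).trans (hH2 s₀ hs₀)
  have hH1nn : 0 ≤ H₁ := (abs_nonneg _).trans (hH1 s₀ hs₀)
  by_cases hInt : Integrable F
      (((volume : Measure ℝ).restrict I).prod ((volume : Measure (ℝ × ℝ)).restrict S))
  swap
  · have hz : ∫ p in (I ×ˢ S : Set (ℝ × ℝ × ℝ)), F p = 0 := by
      rw [hrestr]; exact integral_undef hInt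
    rw [hz, abs_zero]
    have h0 : 0 ≤ H₂ * Real.sqrt C1 + H₁ * Real.sqrt C2 :=
      add_nonneg (mul_nonneg hH2nn (Real.sqrt_nonneg _))
        (mul_nonneg hH1nn (Real.sqrt_nonneg _))
    exact mul_nonneg (mul_nonneg h0 (Real.sqrt_nonneg _)) (Real.sqrt_nonneg _)
  -- main case
  have hηc : Continuous η := hη.continuous
  have hu₀c : Continuous u₀ := hu₀.continuous
  have hvanish : ∀ p : ℝ × ℝ × ℝ, p ∉ (interior I) ×ˢ S → p ∉ tsupport η :=
    fun p hp hmem => hp (hηI hmem)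
  have hSclos : IsCompact (closure S) := hSbdd.isCompact_closure
  have hIntS : ∀ f : ℝ × ℝ → ℝ, Continuous f → IntegrableOn f S :=
    fun f hf => (hf.continuousOn.integrableOn_compact hSclos).mono_set subset_closure
  -- slices of η
  have hslice_cd : ∀ s : ℝ, ContDiff ℝ 1 (fun y : ℝ × ℝ => η (s, y)) :=
    fun s => (hη.of_le (by simp)).comp (contDiff_const.prodMk contDiff_id)
  have hslice_cs : ∀ s : ℝ, HasCompactSupport (fun y : ℝ × ℝ => η (s, y)) := by
    intro s
    apply HasCompactSupport.intro (hηsupp.image continuous_snd)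
    intro y hy; by_contra h; exact hy ⟨(s, y), subset_tsupport η h, rfl⟩
  have hslice_cont : ∀ s : ℝ, Continuous (fun y : ℝ × ℝ => η (s, y)) :=
    fun s => hηc.comp (continuous_const.prodMk continuous_id)
  have hds_cont : ∀ s : ℝ, Continuous (fun y : ℝ × ℝ => ds η (s, y)) :=
    fun s => (continuous_ds hη).comp (continuous_const.prodMk continuous_id)
  have hd1_cont : ∀ s : ℝ, Continuous (fun y : ℝ × ℝ => d1 η (s, y)) :=
    fun s => (continuous_d1 hη).comp (continuous_const.prodMk continuous_id)
  have hd2_cont : ∀ s : ℝ, Continuous (fun y : ℝ × ℝ => d2 η (s, y)) :=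
    fun s => (continuous_d2 hη).comp (continuous_const.prodMk continuous_id)
  -- orthogonality for all parameters
  have orthAll : ∀ t : ℝ, ∫ y in S, u₀ y * η (t, y) = 0 := by
    intro t
    by_cases ht : t ∈ I
    · exact horth t ht
    · have hz : ∀ y : ℝ × ℝ, η (t, y) = 0 := fun y =>
        image_eq_zero_of_notMem_tsupport
          (hvanish _ fun hmem => ht (interior_subset hmem.1))
      simp [hz]
  -- global bounds for derivatives of η
  obtain ⟨Mds, hMds⟩ := (HasCompactSupport.intro hηsupp fun p hp =>
    ds_zero_of_nmem hp : HasCompactSupport (ds η)).exists_bound_of_continuous (continuous_ds hη)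
  obtain ⟨Mη, hMη⟩ := hηsupp.exists_bound_of_continuous hηc
  -- P and Q
  set P : ℝ → ℝ := fun s => ∫ y in S, (pd1 u₀ y * (-y.2) + pd2 u₀ y * y.1) * η (s, y) with hPdef
  set Q : ℝ → ℝ := fun s => ∫ y in S, (pd1 u₀ y * y.1 + pd2 u₀ y * y.2) * η (s, y) with hQdef
  have hG1c : Continuous (fun y : ℝ × ℝ => pd1 u₀ y * (-y.2) + pd2 u₀ y * y.1) :=
    ((continuous_pd1 hu₀).mul continuous_snd.neg).add ((continuous_pd2 hu₀).mul continuous_fst)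
  have hG2c : Continuous (fun y : ℝ × ℝ => pd1 u₀ y * y.1 + pd2 u₀ y * y.2) :=
    ((continuous_pd1 hu₀).mul continuous_fst).add ((continuous_pd2 hu₀).mul continuous_snd)
  -- key fiberwise identities
  have key1 : ∀ s : ℝ, ∫ y in S, u₀ y * ds η (s, y) = 0 := by
    intro s
    have hder : HasDerivAt (fun t => ∫ y in S, u₀ y * η (t, y))
        (∫ y in S, u₀ y * ds η (s, y)) s := by
      have h := hasDerivAt_integral_of_dominated_loc_of_deriv_le
        (μ := (volume : Measure (ℝ × ℝ)).restrict S)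
        (F := fun t (y : ℝ × ℝ) => u₀ y * η (t, y))
        (F' := fun t (y : ℝ × ℝ) => u₀ y * ds η (t, y))
        (x₀ := s) (bound := fun y => ‖u₀ y‖ * Mds) (Metric.ball_mem_nhds s one_pos)
        (Filter.Eventually.of_forall fun t =>
          (hu₀c.mul (hslice_cont t)).aestronglyMeasurable)
        (hIntS _ (hu₀c.mul (hslice_cont s)))
        ((hu₀c.mul (hds_cont s)).aestronglyMeasurable)
        (Filter.Eventually.of_forall fun y t _ => by
          rw [norm_mul]
          exact mul_le_mul_of_nonneg_left (hMds (t, y)) (norm_nonneg _))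
        (hIntS _ (hu₀c.norm.mul continuous_const))
        (Filter.Eventually.of_forall fun y t _ =>
          (hasDerivAt_ds hη (t, y)).const_mul (u₀ y))
      exact h.2
    have hconst : (fun t => ∫ y in S, u₀ y * η (t, y)) = fun _ => (0 : ℝ) := funext orthAll
    rw [hconst] at hder
    exact ((hasDerivAt_const s (0 : ℝ)).unique hder).symm
    -- integration by parts identities
  have hext : ∀ (s : ℝ) (f : ℝ × ℝ → ℝ), (∀ y : ℝ × ℝ, ((s, y) : ℝ × ℝ × ℝ) ∉ tsupport η → f y = 0)
      → ∫ y in S, f y = ∫ y : ℝ × ℝ, f y := by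
    intro s f hf
    apply setIntegral_eq_integral_of_forall_compl_eq_zero
    intro y hy
    exact hf y (hvanish _ fun hmem => hy hmem.2)
  have key2 : ∀ s : ℝ, ∫ y in S, u₀ y * (d1 η (s, y) * (-y.2) + d2 η (s, y) * y.1) = - P s := by
    intro s
    have h1 : ∫ y in S, u₀ y * (d1 η (s, y) * (-y.2) + d2 η (s, y) * y.1)
        = ∫ y : ℝ × ℝ, u₀ y * (d1 η (s, y) * (-y.2) + d2 η (s, y) * y.1) := by
      apply hext s
      intro y hy
      rw [d1_zero_of_nmem hy, d2_zero_of_nmem hy]; ring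
    have h2 : ∫ y : ℝ × ℝ, u₀ y * (d1 η (s, y) * (-y.2) + d2 η (s, y) * y.1)
        = - ∫ y : ℝ × ℝ, (pd1 u₀ y * (-y.2) + pd2 u₀ y * y.1) * η (s, y) :=
      parts_R hu₀ (hslice_cd s) (hslice_cs s)
    have h3 : ∫ y : ℝ × ℝ, (pd1 u₀ y * (-y.2) + pd2 u₀ y * y.1) * η (s, y)
        = ∫ y in S, (pd1 u₀ y * (-y.2) + pd2 u₀ y * y.1) * η (s, y) := by
      symm; apply hext s
      intro y hy
      rw [image_eq_zero_of_notMem_tsupport hy]; ring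
    rw [h1, h2, h3, hPdef]
  have key3 : ∀ s : ℝ, ∫ y in S, u₀ y * (d1 η (s, y) * y.1 + d2 η (s, y) * y.2) = - Q s := by
    intro s
    have h1 : ∫ y in S, u₀ y * (d1 η (s, y) * y.1 + d2 η (s, y) * y.2)
        = ∫ y : ℝ × ℝ, u₀ y * (d1 η (s, y) * y.1 + d2 η (s, y) * y.2) := by
      apply hext s
      intro y hy
      rw [d1_zero_of_nmem hy, d2_zero_of_nmem hy]; ring
    have h2 : ∫ y : ℝ × ℝ, u₀ y * (d1 η (s, y) * y.1 + d2 η (s, y) * y.2)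
        = - (∫ y : ℝ × ℝ, (pd1 u₀ y * y.1 + pd2 u₀ y * y.2) * η (s, y))
          - 2 * ∫ y : ℝ × ℝ, u₀ y * η (s, y) :=
      parts_Y hu₀ (hslice_cd s) (hslice_cs s)
    have h3 : ∫ y : ℝ × ℝ, (pd1 u₀ y * y.1 + pd2 u₀ y * y.2) * η (s, y)
        = ∫ y in S, (pd1 u₀ y * y.1 + pd2 u₀ y * y.2) * η (s, y) := by
      symm; apply hext s
      intro y hy
      rw [image_eq_zero_of_notMem_tsupport hy]; ring
    have h4 : ∫ y : ℝ × ℝ, u₀ y * η (s, y) = 0 := by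
      rw [← hext s _ (fun y hy => by rw [image_eq_zero_of_notMem_tsupport hy]; ring)]
      exact orthAll s
    rw [h1, h2, h3, h4, hQdef]
    ring
  -- the inner integral
  have inner : ∀ s : ℝ, (∫ y in S, F (s, y))
      = deriv w s * (-(τ s + αd s) * P s + hdh s * Q s) := by
    intro s
    have i1 : IntegrableOn (fun y : ℝ × ℝ => deriv w s * (u₀ y * ds η (s, y))) S :=
      hIntS _ (continuous_const.mul (hu₀c.mul (hds_cont s)))
    have i2 : IntegrableOn (fun y : ℝ × ℝ => deriv w s * hdh s * (u₀ y * η (s, y))) S :=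
      hIntS _ (continuous_const.mul (hu₀c.mul (hslice_cont s)))
    have i3 : IntegrableOn (fun y : ℝ × ℝ =>
        deriv w s * (τ s + αd s) * (u₀ y * (d1 η (s, y) * (-y.2) + d2 η (s, y) * y.1))) S :=
      hIntS _ (continuous_const.mul (hu₀c.mul (((hd1_cont s).mul continuous_snd.neg).add
        ((hd2_cont s).mul continuous_fst))))
    have i4 : IntegrableOn (fun y : ℝ × ℝ =>
        deriv w s * hdh s * (u₀ y * (d1 η (s, y) * y.1 + d2 η (s, y) * y.2))) S :=
      hIntS _ (continuous_const.mul (hu₀c.mul (((hd1_cont s).mul continuous_fst).add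
        ((hd2_cont s).mul continuous_snd))))
    have i12 : IntegrableOn (fun y : ℝ × ℝ => deriv w s * (u₀ y * ds η (s, y))
        - deriv w s * hdh s * (u₀ y * η (s, y))) S := i1.sub i2
    have i123 : IntegrableOn (fun y : ℝ × ℝ => (deriv w s * (u₀ y * ds η (s, y))
        - deriv w s * hdh s * (u₀ y * η (s, y)))
        + deriv w s * (τ s + αd s) * (u₀ y * (d1 η (s, y) * (-y.2) + d2 η (s, y) * y.1))) S :=
      i12.add i3
    calc ∫ y in S, F (s, y)
        = ∫ y in S, ((deriv w s * (u₀ y * ds η (s, y))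
            - deriv w s * hdh s * (u₀ y * η (s, y)))
            + deriv w s * (τ s + αd s) * (u₀ y * (d1 η (s, y) * (-y.2) + d2 η (s, y) * y.1))
            - deriv w s * hdh s * (u₀ y * (d1 η (s, y) * y.1 + d2 η (s, y) * y.2))) := by
          congr 1; funext y; simp only [hFdef]; ring
      _ = ((∫ y in S, deriv w s * (u₀ y * ds η (s, y)))
            - ∫ y in S, deriv w s * hdh s * (u₀ y * η (s, y)))
            + (∫ y in S, deriv w s * (τ s + αd s)
                * (u₀ y * (d1 η (s, y) * (-y.2) + d2 η (s, y) * y.1)))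
            - ∫ y in S, deriv w s * hdh s * (u₀ y * (d1 η (s, y) * y.1 + d2 η (s, y) * y.2)) := by
          rw [integral_sub i123 i4, integral_add i12 i3, integral_sub i1 i2]
      _ = deriv w s * (-(τ s + αd s) * P s + hdh s * Q s) := by
          rw [integral_const_mul (deriv w s), integral_const_mul (deriv w s * hdh s),
            integral_const_mul (deriv w s * (τ s + αd s)),
            integral_const_mul (deriv w s * hdh s),
            key1 s, orthAll s, key2 s, key3 s]
          ring
    -- Fubini
  have hL : (∫ p in (I ×ˢ S : Set (ℝ × ℝ × ℝ)), F p)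
      = ∫ s in I, deriv w s * (-(τ s + αd s) * P s + hdh s * Q s) := by
    rw [hrestr, MeasureTheory.integral_prod _ hInt]
    exact integral_congr_ae (Filter.Eventually.of_forall fun s => inner s)
  have hgint : Integrable (fun s => deriv w s * (-(τ s + αd s) * P s + hdh s * Q s))
      (volume.restrict I) := by
    have h := hInt.integral_prod_left
    rwa [show (fun s => ∫ y, F (s, y) ∂((volume : Measure (ℝ × ℝ)).restrict S))
      = fun s => deriv w s * (-(τ s + αd s) * P s + hdh s * Q s) from funext inner] at h
  -- continuity and support of P, Q
  have hPc : Continuous P := by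
    rw [hPdef]
    apply continuous_of_dominated (bound := fun y : ℝ × ℝ => ‖pd1 u₀ y * (-y.2) + pd2 u₀ y * y.1‖ * Mη)
    · exact fun s => (hG1c.mul (hslice_cont s)).aestronglyMeasurable
    · intro s
      refine Filter.Eventually.of_forall fun y => ?_
      rw [norm_mul]
      exact mul_le_mul_of_nonneg_left (hMη (s, y)) (norm_nonneg _)
    · exact hIntS _ (hG1c.norm.mul continuous_const)
    · exact Filter.Eventually.of_forall fun y =>
        continuous_const.mul (hηc.comp (continuous_id.prodMk continuous_const))
  have hQc : Continuous Q := by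
    rw [hQdef]
    apply continuous_of_dominated (bound := fun y : ℝ × ℝ => ‖pd1 u₀ y * y.1 + pd2 u₀ y * y.2‖ * Mη)
    · exact fun s => (hG2c.mul (hslice_cont s)).aestronglyMeasurable
    · intro s
      refine Filter.Eventually.of_forall fun y => ?_
      rw [norm_mul]
      exact mul_le_mul_of_nonneg_left (hMη (s, y)) (norm_nonneg _)
    · exact hIntS _ (hG2c.norm.mul continuous_const)
    · exact Filter.Eventually.of_forall fun y =>
        continuous_const.mul (hηc.comp (continuous_id.prodMk continuous_const))
  have hzslice : ∀ s : ℝ, s ∉ Prod.fst '' tsupport η → ∀ y : ℝ × ℝ, η (s, y) = 0 := by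
    intro s hs y
    by_contra hne
    exact hs ⟨(s, y), subset_tsupport η hne, rfl⟩
  have hPsupp : HasCompactSupport P := by
    apply HasCompactSupport.intro (hηsupp.image continuous_fst)
    intro s hs
    rw [hPdef]; simp [hzslice s hs]
  have hQsupp : HasCompactSupport Q := by
    apply HasCompactSupport.intro (hηsupp.image continuous_fst)
    intro s hs
    rw [hQdef]; simp [hzslice s hs]
  -- the function N s = ∫_S η(s,·)²
  have hNcont : Continuous (fun s : ℝ => ∫ y in S, η (s, y) ^ 2) := by
    apply continuous_of_dominated (bound := fun _ : ℝ × ℝ => Mη ^ 2)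
    · exact fun s => ((hslice_cont s).pow 2).aestronglyMeasurable
    · intro s
      refine Filter.Eventually.of_forall fun y => ?_
      rw [Real.norm_eq_abs, abs_pow]
      refine pow_le_pow_left₀ (abs_nonneg _) ?_ 2
      simpa [Real.norm_eq_abs] using hMη (s, y)
    · exact hIntS _ continuous_const
    · exact Filter.Eventually.of_forall fun y =>
        (hηc.comp (continuous_id.prodMk continuous_const)).pow 2
  have hNsupp : HasCompactSupport (fun s : ℝ => ∫ y in S, η (s, y) ^ 2) := by
    apply HasCompactSupport.intro (hηsupp.image continuous_fst)
    intro s hs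
    simp [hzslice s hs]
  have hNnn : ∀ s : ℝ, 0 ≤ ∫ y in S, η (s, y) ^ 2 :=
    fun s => integral_nonneg fun y => sq_nonneg _
  -- η² over the product
  have hη2int : Integrable (fun p : ℝ × ℝ × ℝ => η p ^ 2)
      (((volume : Measure ℝ).restrict I).prod ((volume : Measure (ℝ × ℝ)).restrict S)) := by
    rw [← hrestr]
    exact ((hηc.pow 2).integrable_of_hasCompactSupport
      (HasCompactSupport.intro hηsupp fun p hp => by
        simp [image_eq_zero_of_notMem_tsupport hp])).restrict
  have hEeq : (∫ p in (I ×ˢ S : Set (ℝ × ℝ × ℝ)), η p ^ 2)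
      = ∫ s in I, ∫ y in S, η (s, y) ^ 2 := by
    rw [hrestr, MeasureTheory.integral_prod _ hη2int]
  have hEnn : 0 ≤ ∫ p in (I ×ˢ S : Set (ℝ × ℝ × ℝ)), η p ^ 2 :=
    integral_nonneg fun p => sq_nonneg _
  -- w' facts
  have hwc : Continuous (deriv w) := hw.continuous_deriv (by simp)
  have hw2int : IntegrableOn (fun s => deriv w s ^ 2) I :=
    ((hwc.pow 2).integrable_of_hasCompactSupport
      (HasCompactSupport.intro hwsupp.deriv fun s hs => by
        simp [image_eq_zero_of_notMem_tsupport hs])).integrableOn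
  have hP2int : IntegrableOn (fun s => P s ^ 2) I :=
    ((hPc.pow 2).integrable_of_hasCompactSupport
      (HasCompactSupport.intro hPsupp fun s hs => by
        simp [image_eq_zero_of_notMem_tsupport hs])).integrableOn
  have hQ2int : IntegrableOn (fun s => Q s ^ 2) I :=
    ((hQc.pow 2).integrable_of_hasCompactSupport
      (HasCompactSupport.intro hQsupp fun s hs => by
        simp [image_eq_zero_of_notMem_tsupport hs])).integrableOn
  -- Cauchy-Schwarz in y
  have hPbd : ∀ s : ℝ, |P s| ≤ Real.sqrt C1 * Real.sqrt (∫ y in S, η (s, y) ^ 2) := by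
    intro s
    have h := cs_integral (μ := (volume : Measure (ℝ × ℝ)).restrict S)
      (f := fun y : ℝ × ℝ => pd1 u₀ y * (-y.2) + pd2 u₀ y * y.1) (g := fun y => η (s, y))
      hG1c.aestronglyMeasurable (hslice_cont s).aestronglyMeasurable
      (hIntS _ (hG1c.pow 2)) (hIntS _ ((hslice_cont s).pow 2))
    rw [hPdef, hC1]
    exact h
  have hQbd : ∀ s : ℝ, |Q s| ≤ Real.sqrt C2 * Real.sqrt (∫ y in S, η (s, y) ^ 2) := by
    intro s
    have h := cs_integral (μ := (volume : Measure (ℝ × ℝ)).restrict S)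
      (f := fun y : ℝ × ℝ => pd1 u₀ y * y.1 + pd2 u₀ y * y.2) (g := fun y => η (s, y))
      hG2c.aestronglyMeasurable (hslice_cont s).aestronglyMeasurable
      (hIntS _ (hG2c.pow 2)) (hIntS _ ((hslice_cont s).pow 2))
    rw [hQdef, hC2]
    exact h
  -- Cauchy-Schwarz in s
  have hstep1 : ∫ s in I, |deriv w s| * |P s|
      ≤ Real.sqrt (∫ s in I, deriv w s ^ 2) * Real.sqrt (∫ s in I, P s ^ 2) :=
    cs_abs hwc.aestronglyMeasurable hPc.aestronglyMeasurable hw2int hP2int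
  have hstep1' : ∫ s in I, |deriv w s| * |Q s|
      ≤ Real.sqrt (∫ s in I, deriv w s ^ 2) * Real.sqrt (∫ s in I, Q s ^ 2) :=
    cs_abs hwc.aestronglyMeasurable hQc.aestronglyMeasurable hw2int hQ2int
  have hNCint : IntegrableOn (fun s : ℝ => C1 * ∫ y in S, η (s, y) ^ 2) I :=
    ((continuous_const.mul hNcont).integrable_of_hasCompactSupport
      (HasCompactSupport.intro hNsupp fun s hs => by
        simp [image_eq_zero_of_notMem_tsupport hs])).integrableOn
  have hNCint' : IntegrableOn (fun s : ℝ => C2 * ∫ y in S, η (s, y) ^ 2) I :=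
    ((continuous_const.mul hNcont).integrable_of_hasCompactSupport
      (HasCompactSupport.intro hNsupp fun s hs => by
        simp [image_eq_zero_of_notMem_tsupport hs])).integrableOn
  have hstep2 : ∫ s in I, P s ^ 2 ≤ C1 * ∫ p in (I ×ˢ S : Set (ℝ × ℝ × ℝ)), η p ^ 2 := by
    have hmono : ∫ s in I, P s ^ 2 ≤ ∫ s in I, C1 * ∫ y in S, η (s, y) ^ 2 := by
      apply setIntegral_mono_on hP2int hNCint hImeas
      intro s _
      have h := hPbd s
      have h2 : P s ^ 2 ≤ (Real.sqrt C1 * Real.sqrt (∫ y in S, η (s, y) ^ 2)) ^ 2 := by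
        rw [← sq_abs]
        exact pow_le_pow_left₀ (abs_nonneg _) h 2
      rwa [mul_pow, Real.sq_sqrt hC1nn, Real.sq_sqrt (hNnn s)] at h2
    rw [hEeq]
    exact hmono.trans (le_of_eq (integral_const_mul C1 _))
  have hstep2' : ∫ s in I, Q s ^ 2 ≤ C2 * ∫ p in (I ×ˢ S : Set (ℝ × ℝ × ℝ)), η p ^ 2 := by
    have hmono : ∫ s in I, Q s ^ 2 ≤ ∫ s in I, C2 * ∫ y in S, η (s, y) ^ 2 := by
      apply setIntegral_mono_on hQ2int hNCint' hImeas
      intro s _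
      have h := hQbd s
      have h2 : Q s ^ 2 ≤ (Real.sqrt C2 * Real.sqrt (∫ y in S, η (s, y) ^ 2)) ^ 2 := by
        rw [← sq_abs]
        exact pow_le_pow_left₀ (abs_nonneg _) h 2
      rwa [mul_pow, Real.sq_sqrt hC2nn, Real.sq_sqrt (hNnn s)] at h2
    rw [hEeq]
    exact hmono.trans (le_of_eq (integral_const_mul C2 _))
  -- pointwise bound on I
  have habs : ∀ s ∈ I, |deriv w s * (-(τ s + αd s) * P s + hdh s * Q s)|
      ≤ H₂ * (|deriv w s| * |P s|) + H₁ * (|deriv w s| * |Q s|) := by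
    intro s hs
    have ha := hH2 s hs
    have hb := hH1 s hs
    calc |deriv w s * (-(τ s + αd s) * P s + hdh s * Q s)|
        = |deriv w s| * |(-(τ s + αd s) * P s + hdh s * Q s)| := abs_mul _ _
      _ ≤ |deriv w s| * (|τ s + αd s| * |P s| + |hdh s| * |Q s|) := by
          apply mul_le_mul_of_nonneg_left _ (abs_nonneg _)
          calc |(-(τ s + αd s) * P s + hdh s * Q s)|
              ≤ |(-(τ s + αd s)) * P s| + |hdh s * Q s| := abs_add_le _ _
            _ = |τ s + αd s| * |P s| + |hdh s| * |Q s| := by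
                rw [abs_mul, abs_mul, abs_neg]
      _ ≤ |deriv w s| * (H₂ * |P s| + H₁ * |Q s|) := by
          apply mul_le_mul_of_nonneg_left _ (abs_nonneg _)
          exact add_le_add (mul_le_mul_of_nonneg_right ha (abs_nonneg _))
            (mul_le_mul_of_nonneg_right hb (abs_nonneg _))
      _ = H₂ * (|deriv w s| * |P s|) + H₁ * (|deriv w s| * |Q s|) := by ring
  have hwPint : IntegrableOn (fun s => |deriv w s| * |P s|) I :=
    ((hwc.abs.mul hPc.abs).integrable_of_hasCompactSupport
      (HasCompactSupport.intro hwsupp.deriv fun s hs => by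
        simp [image_eq_zero_of_notMem_tsupport hs])).integrableOn
  have hwQint : IntegrableOn (fun s => |deriv w s| * |Q s|) I :=
    ((hwc.abs.mul hQc.abs).integrable_of_hasCompactSupport
      (HasCompactSupport.intro hwsupp.deriv fun s hs => by
        simp [image_eq_zero_of_notMem_tsupport hs])).integrableOn
  have hsumint : IntegrableOn (fun s => H₂ * (|deriv w s| * |P s|)
      + H₁ * (|deriv w s| * |Q s|)) I := (hwPint.const_mul H₂).add (hwQint.const_mul H₁)
  have e1 : Real.sqrt (∫ s in I, P s ^ 2)
      ≤ Real.sqrt C1 * Real.sqrt (∫ p in (I ×ˢ S : Set (ℝ × ℝ × ℝ)), η p ^ 2) := by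
    have h := Real.sqrt_le_sqrt hstep2
    rwa [Real.sqrt_mul hC1nn] at h
  have e2 : Real.sqrt (∫ s in I, Q s ^ 2)
      ≤ Real.sqrt C2 * Real.sqrt (∫ p in (I ×ˢ S : Set (ℝ × ℝ × ℝ)), η p ^ 2) := by
    have h := Real.sqrt_le_sqrt hstep2'
    rwa [Real.sqrt_mul hC2nn] at h
  calc |∫ p in (I ×ˢ S : Set (ℝ × ℝ × ℝ)), F p|
      = |∫ s in I, deriv w s * (-(τ s + αd s) * P s + hdh s * Q s)| := by rw [hL]
    _ ≤ ∫ s in I, |deriv w s * (-(τ s + αd s) * P s + hdh s * Q s)| := by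
        exact norm_integral_le_integral_norm
          (fun s => deriv w s * (-(τ s + αd s) * P s + hdh s * Q s))
    _ ≤ ∫ s in I, (H₂ * (|deriv w s| * |P s|) + H₁ * (|deriv w s| * |Q s|)) :=
        setIntegral_mono_on hgint.abs hsumint hImeas habs
    _ = H₂ * (∫ s in I, |deriv w s| * |P s|) + H₁ * (∫ s in I, |deriv w s| * |Q s|) := by
        rw [integral_add (hwPint.const_mul H₂) (hwQint.const_mul H₁),
          integral_const_mul, integral_const_mul]
    _ ≤ H₂ * (Real.sqrt (∫ s in I, deriv w s ^ 2) * Real.sqrt (∫ s in I, P s ^ 2))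
        + H₁ * (Real.sqrt (∫ s in I, deriv w s ^ 2) * Real.sqrt (∫ s in I, Q s ^ 2)) :=
        add_le_add (mul_le_mul_of_nonneg_left hstep1 hH2nn)
          (mul_le_mul_of_nonneg_left hstep1' hH1nn)
    _ ≤ H₂ * (Real.sqrt (∫ s in I, deriv w s ^ 2)
          * (Real.sqrt C1 * Real.sqrt (∫ p in (I ×ˢ S : Set (ℝ × ℝ × ℝ)), η p ^ 2)))
        + H₁ * (Real.sqrt (∫ s in I, deriv w s ^ 2)
          * (Real.sqrt C2 * Real.sqrt (∫ p in (I ×ˢ S : Set (ℝ × ℝ × ℝ)), η p ^ 2))) :=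
        add_le_add
          (mul_le_mul_of_nonneg_left
            (mul_le_mul_of_nonneg_left e1 (Real.sqrt_nonneg _)) hH2nn)
          (mul_le_mul_of_nonneg_left
            (mul_le_mul_of_nonneg_left e2 (Real.sqrt_nonneg _)) hH1nn)
    _ = (H₂ * Real.sqrt C1 + H₁ * Real.sqrt C2)
          * Real.sqrt (∫ s in I, deriv w s ^ 2)
          * Real.sqrt (∫ p in (I ×ˢ S : Set (ℝ × ℝ × ℝ)), η p ^ 2) := by ring
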